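/- arXiv:1703.01326 — 2 statements merged into one kernel-verified Lean document; each statement's English description precedes it below -/
import Mathlib

section
/- (Representer theorem) Let L : ℝ^n → ℝ be an arbitrary function and suppose f̂ ∈ H minimizes the functional M(f) := L(f(x_1), f(x_2), …, f(x_n)) + ‖f‖² over f ∈ H. Then f̂ lies in the span of k(x_1), …, k(x_n); that is, there exist coefficients α_1, …, α_n ∈ ℝ with f̂ = Σ_{i=1}^n α_i k(x_i). -/
open scoped RealInnerProductSpace

/-!
Project a minimizer `f̂` orthogonally onto `V = span {k(xᵢ)}`. The projection has the same
inner products with every `k(xᵢ)`, hence the same data term `L(f(x₁), …, f(xₙ))`, while it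
strictly shrinks the norm unless `f̂ ∈ V`. Minimality therefore forces `f̂ ∈ V`.
-/

namespace Submodule

variable {𝕜 E : Type*} [RCLike 𝕜] [NormedAddCommGroup E] [InnerProductSpace 𝕜 E]
  (K : Submodule 𝕜 E) [K.HasOrthogonalProjection]

theorem inner_starProjection_right_of_mem {u : E} (hu : u ∈ K) (v : E) :
    inner 𝕜 u (K.starProjection v) = inner 𝕜 u v := by
  rw [← inner_starProjection_left_eq_right, starProjection_eq_self_iff.mpr hu]

theorem mem_of_add_norm_sq_le_starProjection (J : E → ℝ) {f : E}
    (hJ : J (K.starProjection f) = J f)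
    (hmin : J f + ‖f‖ ^ 2 ≤ J (K.starProjection f) + ‖K.starProjection f‖ ^ 2) :
    f ∈ K := by
  have hsq : ‖f‖ ^ 2 ≤ ‖K.starProjection f‖ ^ 2 := by linarith
  rw [mem_iff_norm_starProjection]
  exact le_antisymm (K.norm_starProjection_apply_le f)
    ((pow_le_pow_iff_left₀ (norm_nonneg _) (norm_nonneg _) two_ne_zero).mp hsq)

end Submodule

theorem representer_theorem_general
    {H : Type*} [NormedAddCommGroup H] [InnerProductSpace ℝ H]
    {Ω : Type*} (k : Ω → H) {n : ℕ} (x : Fin n → Ω)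
    (L : (Fin n → ℝ) → ℝ) (fhat : H)
    (hmin : ∀ f : H,
      L (fun i => ⟪k (x i), fhat⟫) + ‖fhat‖ ^ 2 ≤
        L (fun i => ⟪k (x i), f⟫) + ‖f‖ ^ 2) :
    ∃ α : Fin n → ℝ, fhat = ∑ i, α i • k (x i) := by
  let V : Submodule ℝ H := Submodule.span ℝ (Set.range fun i => k (x i))
  have : FiniteDimensional ℝ V := FiniteDimensional.span_of_finite ℝ (Set.finite_range _)
  have hV : ∀ i, k (x i) ∈ V := fun i => Submodule.subset_span ⟨i, rfl⟩
  have hdata : (fun i => ⟪k (x i), V.starProjection fhat⟫) = fun i => ⟪k (x i), fhat⟫ :=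
    funext fun i => V.inner_starProjection_right_of_mem (hV i) fhat
  have hmem : fhat ∈ V :=
    V.mem_of_add_norm_sq_le_starProjection (fun f => L fun i => ⟪k (x i), f⟫)
      (congrArg L hdata) (hmin _)
  obtain ⟨α, hα⟩ := (Submodule.mem_span_range_iff_exists_fun ℝ).mp hmem
  exact ⟨α, hα.symm⟩

/-- **Representer theorem.** If `f̂` minimizes
`M(f) = L(f(x₁), …, f(xₙ)) + ‖f‖²` over `f ∈ H`, then `f̂` lies in the span of
`k(x₁), …, k(xₙ)`: there exist `α₁, …, αₙ ∈ ℝ` with `f̂ = Σ αᵢ k(xᵢ)`. -/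
theorem representer_theorem
    {H : Type*} [NormedAddCommGroup H] [InnerProductSpace ℝ H]
    {Ω : Type*} (k : Ω → H) {n : ℕ} (x : Fin n → Ω)
    (G : Matrix (Fin n) (Fin n) ℝ)
    (hG : ∀ i j, G i j = ⟪k (x i), k (x j)⟫)
    (hGunit : IsUnit G.det)
    (L : (Fin n → ℝ) → ℝ) (fhat : H)
    (hmin : ∀ f : H,
      L (fun i => ⟪k (x i), fhat⟫) + ‖fhat‖ ^ 2 ≤
        L (fun i => ⟪k (x i), f⟫) + ‖f‖ ^ 2) :
    ∃ α : Fin n → ℝ, fhat = ∑ i, α i • k (x i) :=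
  representer_theorem_general k x L fhat hmin
end

section
/- (Posterior mode equals penalized least squares) Let Θ be a set, y ∈ ℝ^n, g : Θ → ℝ^n, and r > 0. Define J(θ, f) := Σ_{i=1}^n (y_i − g_i(θ) − f(x_i))² + r ‖f‖² for θ ∈ Θ, f ∈ H, and Q(θ, δ) := ‖y − g(θ) − δ‖² + r δᵀ G⁻¹ δ for θ ∈ Θ, δ ∈ ℝ^n (so that maximizing the profile posterior density exp{−Q(θ,δ)/(2σ²)} with r = σ²/τ² is the same as minimizing Q). If (θ̂, Δ̂) minimizes J over Θ × H, then the pair (θ̂, Δ̂(x)) with Δ̂(x) := (Δ̂(x_1), …, Δ̂(x_n))ᵀ minimizes Q over Θ × ℝ^n. -/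
open scoped RealInnerProductSpace Matrix

/-- **Posterior mode equals penalized least squares.** If `(θ̂, Δ̂)`
minimizes `J(θ, f) = Σᵢ (yᵢ − gᵢ(θ) − f(xᵢ))² + r‖f‖²` over `Θ × H`, then
`(θ̂, Δ̂(x))` minimizes `Q(θ, δ) = ‖y − g(θ) − δ‖² + r δᵀ G⁻¹ δ` over `Θ × ℝⁿ`. -/
theorem posterior_mode_eq_penalized_least_squares
    {H : Type*} [NormedAddCommGroup H] [InnerProductSpace ℝ H]
    {Ω : Type*} (k : Ω → H) {n : ℕ} (x : Fin n → Ω)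
    (G : Matrix (Fin n) (Fin n) ℝ)
    (hG : ∀ i j, G i j = ⟪k (x i), k (x j)⟫)
    (hGunit : IsUnit G.det)
    {Θ : Type*} (y : Fin n → ℝ) (g : Θ → Fin n → ℝ) (r : ℝ) (hr : 0 < r)
    (θhat : Θ) (Δhat : H)
    (hmin : ∀ (θ : Θ) (f : H),
      (∑ i, (y i - g θhat i - ⟪k (x i), Δhat⟫) ^ 2) + r * ‖Δhat‖ ^ 2 ≤
        (∑ i, (y i - g θ i - ⟪k (x i), f⟫) ^ 2) + r * ‖f‖ ^ 2) :
    ∀ (θ : Θ) (δ : Fin n → ℝ),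
      (∑ i, (y i - g θhat i - ⟪k (x i), Δhat⟫) ^ 2) +
          r * ((fun i => ⟪k (x i), Δhat⟫) ⬝ᵥ
            G⁻¹.mulVec (fun i => ⟪k (x i), Δhat⟫)) ≤
        (∑ i, (y i - g θ i - δ i) ^ 2) + r * (δ ⬝ᵥ G⁻¹.mulVec δ) := by
  -- key facts about the interpolant of a value vector v
  have key : ∀ v : Fin n → ℝ,
      (∀ j, ⟪k (x j), ∑ i, (G⁻¹.mulVec v) i • k (x i)⟫ = v j) ∧
      (∀ f : H, ⟪∑ i, (G⁻¹.mulVec v) i • k (x i), f⟫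
          = ∑ j, (G⁻¹.mulVec v) j * ⟪k (x j), f⟫) ∧
      ‖∑ i, (G⁻¹.mulVec v) i • k (x i)‖ ^ 2 = v ⬝ᵥ G⁻¹.mulVec v := by
    intro v
    have hval : ∀ j, ⟪k (x j), ∑ i, (G⁻¹.mulVec v) i • k (x i)⟫ = v j := by
      intro j
      have h1 : ⟪k (x j), ∑ i, (G⁻¹.mulVec v) i • k (x i)⟫
          = (G *ᵥ (G⁻¹.mulVec v)) j := by
        simp [inner_sum, real_inner_smul_right, Matrix.mulVec, dotProduct,
          hG, mul_comm]
      rw [h1, Matrix.mulVec_mulVec, Matrix.mul_nonsing_inv G hGunit,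
        Matrix.one_mulVec]
    have hsum : ∀ f : H, ⟪∑ i, (G⁻¹.mulVec v) i • k (x i), f⟫
        = ∑ j, (G⁻¹.mulVec v) j * ⟪k (x j), f⟫ := by
      intro f
      simp [sum_inner, real_inner_smul_left]
    refine ⟨hval, hsum, ?_⟩
    rw [← real_inner_self_eq_norm_sq, hsum]
    simp only [hval]
    simp [dotProduct, mul_comm]
  intro θ δ
  obtain ⟨hδval, hδsum, hδnorm⟩ := key δ
  obtain ⟨hvval, hvsum, hvnorm⟩ := key (fun i => ⟪k (x i), Δhat⟫)
  set sδ := ∑ i, (G⁻¹.mulVec δ) i • k (x i) with hsδ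
  set sv := ∑ i, (G⁻¹.mulVec (fun i => ⟪k (x i), Δhat⟫)) i • k (x i) with hsv
  -- ⟪sv, Δhat⟫ = ‖sv‖²
  have hinner : ⟪sv, Δhat⟫ = ‖sv‖ ^ 2 := by
    rw [hvsum Δhat, ← real_inner_self_eq_norm_sq, hvsum sv]
    refine Finset.sum_congr rfl fun j _ => ?_
    rw [hvval j]
  -- projection inequality : ‖sv‖² ≤ ‖Δhat‖²
  have hproj : ‖sv‖ ^ 2 ≤ ‖Δhat‖ ^ 2 := by
    have h0 : (0 : ℝ) ≤ ‖Δhat - sv‖ ^ 2 := by positivity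
    have hexp : ‖Δhat - sv‖ ^ 2 = ‖Δhat‖ ^ 2 - 2 * ⟪Δhat, sv⟫ + ‖sv‖ ^ 2 := by
      rw [norm_sub_sq_real]
    rw [hexp, real_inner_comm, hinner] at h0
    linarith
  have hmain := hmin θ sδ
  calc (∑ i, (y i - g θhat i - ⟪k (x i), Δhat⟫) ^ 2) +
          r * ((fun i => ⟪k (x i), Δhat⟫) ⬝ᵥ
            G⁻¹.mulVec (fun i => ⟪k (x i), Δhat⟫))
      = (∑ i, (y i - g θhat i - ⟪k (x i), Δhat⟫) ^ 2) + r * ‖sv‖ ^ 2 := by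
        rw [hvnorm]
    _ ≤ (∑ i, (y i - g θhat i - ⟪k (x i), Δhat⟫) ^ 2) + r * ‖Δhat‖ ^ 2 := by
        nlinarith
    _ ≤ (∑ i, (y i - g θ i - ⟪k (x i), sδ⟫) ^ 2) + r * ‖sδ‖ ^ 2 := hmain
    _ = (∑ i, (y i - g θ i - δ i) ^ 2) + r * (δ ⬝ᵥ G⁻¹.mulVec δ) := by
        rw [hδnorm]
        congr 1
        exact Finset.sum_congr rfl fun i _ => by rw [hδval i]
end
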